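/- Under the self-supervised model, condition on Y = +1 so that (Z − k₂)/(k₁σ₁²) ∼ χ²_d. If the threshold satisfies b ≥ dk₁(β+1)σ₁²/2 + k₂ − δ·dk₁(β+1)σ₁²/2 with δ ∈ (0, (β−1)/(β+1)), then: if δ ∈ [(β−3)/(β+1), (β−1)/(β+1)), P(Z > b | Y=+1) ≤ exp(−d(β−1−δ(β+1))²/32); and if δ ∈ (0, (β−3)/(β+1)), P(Z > b | Y=+1) ≤ exp(−d(β−1−δ(β+1))/16). -/

import Mathlib

/-!
Chernoff bound for the chi-squared law. The moment generating function of `χ²_d` is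
`(1 - 2s)^(-d/2)` for `s < 1/2`; at `s = t / (2(1 + t))` Markov's inequality gives
`P(χ²_d ≥ d(1 + t)) ≤ exp(-d/2 · (t - log(1 + t)))`, and `log y ≤ sinh (log y)` yields
`t - log(1 + t) ≥ t² / (2(1 + t))`, which is `≥ t²/4` for `t ≤ 1` and `≥ t/4` for `t ≥ 1`.
Rescaling `Z`, the threshold `b` lies above `d(1 + t)` for `t = (β - 1 - δ(β + 1)) / 2`.
-/

open MeasureTheory ProbabilityTheory Real

/-- The chi-squared distribution with `d` degrees of freedom, realized as the law of the
sum of `d` squared i.i.d. standard normals. -/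
noncomputable def chiSq (d : ℕ) : Measure ℝ :=
  Measure.map (fun w : Fin d → ℝ => ∑ i, (w i) ^ 2)
    (Measure.pi fun _ : Fin d => gaussianReal 0 1)

lemma Real.sq_div_two_mul_one_add_le_sub_log_one_add {t : ℝ} (ht : 0 ≤ t) :
    t ^ 2 / (2 * (1 + t)) ≤ t - log (1 + t) := by
  have h1t : 0 < 1 + t := by linarith
  have hsinh : log (1 + t) ≤ ((1 + t) - (1 + t)⁻¹) / 2 := by
    rw [← sinh_log h1t]
    exact self_le_sinh_iff.2 (log_nonneg (by linarith))
  have hgap : t - ((1 + t) - (1 + t)⁻¹) / 2 = t ^ 2 / (2 * (1 + t)) := by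
    field_simp
    ring
  linarith

lemma Real.exp_mul_sum_sq {ι : Type*} [Fintype ι] (s : ℝ) (w : ι → ℝ) :
    rexp (s * ∑ i, w i ^ 2) = ∏ i, rexp (s * w i ^ 2) := by
  rw [Finset.mul_sum, exp_sum]

lemma measurable_sum_sq (ι : Type*) [Fintype ι] : Measurable fun w : ι → ℝ => ∑ i, w i ^ 2 := by
  fun_prop

namespace ProbabilityTheory

lemma gaussianPDFReal_zero_one_mul_exp_mul_sq (s x : ℝ) :
    gaussianPDFReal 0 1 x * rexp (s * x ^ 2) = (√(2 * π))⁻¹ * rexp (-(1 / 2 - s) * x ^ 2) := by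
  rw [gaussianPDFReal, mul_assoc, ← exp_add]
  simp only [NNReal.coe_one, mul_one, sub_zero]
  ring_nf

lemma integrable_exp_mul_sq_gaussianReal {s : ℝ} (hs : s < 1 / 2) :
    Integrable (fun x => rexp (s * x ^ 2)) (gaussianReal 0 1) := by
  rw [gaussianReal_of_var_ne_zero 0 one_ne_zero, integrable_withDensity_iff_integrable_smul'
    (measurable_gaussianPDF 0 1) (ae_of_all _ fun _ => gaussianPDF_lt_top)]
  simp only [toReal_gaussianPDF, smul_eq_mul, gaussianPDFReal_zero_one_mul_exp_mul_sq]
  exact (integrable_exp_neg_mul_sq (by linarith)).const_mul _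

lemma integral_exp_mul_sq_gaussianReal {s : ℝ} (hs : s < 1 / 2) :
    ∫ x, rexp (s * x ^ 2) ∂gaussianReal 0 1 = (√(1 - 2 * s))⁻¹ := by
  have h2s : 0 < 1 - 2 * s := by linarith
  simp only [integral_gaussianReal_eq_integral_smul one_ne_zero, smul_eq_mul,
    gaussianPDFReal_zero_one_mul_exp_mul_sq, integral_const_mul, integral_gaussian]
  rw [show π / (1 / 2 - s) = 2 * π / (1 - 2 * s) by field_simp, sqrt_div' _ h2s.le]
  have : √(2 * π) ≠ 0 := by positivity
  field_simp

instance isProbabilityMeasure_chiSq (d : ℕ) : IsProbabilityMeasure (chiSq d) :=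
  Measure.isProbabilityMeasure_map (measurable_sum_sq (Fin d)).aemeasurable

lemma integrable_exp_mul_chiSq (d : ℕ) {s : ℝ} (hs : s < 1 / 2) :
    Integrable (fun x => rexp (s * x)) (chiSq d) := by
  rw [chiSq, integrable_map_measure (by fun_prop) (measurable_sum_sq (Fin d)).aemeasurable]
  simpa only [Function.comp_def, exp_mul_sum_sq] using
    Integrable.fintype_prod fun _ => integrable_exp_mul_sq_gaussianReal hs

lemma mgf_id_chiSq (d : ℕ) {s : ℝ} (hs : s < 1 / 2) :
    mgf id (chiSq d) s = (√(1 - 2 * s))⁻¹ ^ d := by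
  rw [mgf, chiSq, integral_map (measurable_sum_sq (Fin d)).aemeasurable (by fun_prop)]
  simp only [id_eq, exp_mul_sum_sq]
  rw [integral_fintype_prod_eq_pow (fun x => rexp (s * x ^ 2)),
    integral_exp_mul_sq_gaussianReal hs, Fintype.card_fin]

lemma measureReal_chiSq_ge_le (d : ℕ) {t : ℝ} (ht : 0 < t) :
    (chiSq d).real {x | d * (1 + t) ≤ x} ≤ rexp (-d / 2 * (t - log (1 + t))) := by
  have h1t : 0 < 1 + t := by linarith
  -- the optimal Chernoff parameter: `1 - 2 s = (1 + t)⁻¹`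
  set s := t / (2 * (1 + t)) with hs_def
  have h12s : 1 - 2 * s = (1 + t)⁻¹ := by rw [hs_def]; field_simp; ring
  have hs : s < 1 / 2 := by linarith [inv_pos.2 h1t]
  calc (chiSq d).real {x | d * (1 + t) ≤ x}
      ≤ rexp (-s * (d * (1 + t))) * mgf id (chiSq d) s :=
        measure_ge_le_exp_mul_mgf _ (by positivity) (integrable_exp_mul_chiSq d hs)
    _ = rexp (-s * (d * (1 + t))) * √(1 + t) ^ d := by
        rw [mgf_id_chiSq d hs, h12s, sqrt_inv, inv_inv]
    _ = rexp (-d / 2 * (t - log (1 + t))) := by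
        rw [← exp_log (sqrt_pos.2 h1t), ← exp_nat_mul, ← exp_add, log_sqrt h1t.le, hs_def]
        congr 1
        field_simp
        ring

lemma measureReal_chiSq_ge_le_exp_sq_div (d : ℕ) {t : ℝ} (ht : 0 < t) :
    (chiSq d).real {x | d * (1 + t) ≤ x} ≤ rexp (-d * t ^ 2 / (4 * (1 + t))) := by
  refine (measureReal_chiSq_ge_le d ht).trans (exp_le_exp.2 ?_)
  have hlog := Real.sq_div_two_mul_one_add_le_sub_log_one_add ht.le
  have hd : (0 : ℝ) ≤ d / 2 := by positivity
  calc -d / 2 * (t - log (1 + t)) ≤ -d / 2 * (t ^ 2 / (2 * (1 + t))) := by nlinarith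
    _ = -d * t ^ 2 / (4 * (1 + t)) := by field_simp; ring

lemma measureReal_chiSq_ge_le_exp_sq (d : ℕ) {t : ℝ} (ht : 0 < t) (ht1 : t ≤ 1) :
    (chiSq d).real {x | d * (1 + t) ≤ x} ≤ rexp (-d * t ^ 2 / 8) := by
  refine (measureReal_chiSq_ge_le_exp_sq_div d ht).trans (exp_le_exp.2 ?_)
  rw [div_le_div_iff₀ (by positivity) (by norm_num)]
  nlinarith [mul_nonneg (mul_nonneg d.cast_nonneg (sq_nonneg t)) (sub_nonneg.2 ht1)]

lemma measureReal_chiSq_ge_le_exp (d : ℕ) {t : ℝ} (ht1 : 1 ≤ t) :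
    (chiSq d).real {x | d * (1 + t) ≤ x} ≤ rexp (-d * t / 8) := by
  refine (measureReal_chiSq_ge_le_exp_sq_div d (by linarith)).trans (exp_le_exp.2 ?_)
  rw [div_le_div_iff₀ (by positivity) (by norm_num)]
  nlinarith [mul_nonneg (mul_nonneg d.cast_nonneg (by linarith : (0 : ℝ) ≤ t)) (sub_nonneg.2 ht1)]

end ProbabilityTheory

lemma MeasureTheory.Measure.map_apply_Ioi_of_map_eq {Ω : Type*} [MeasurableSpace Ω]
    {μ : Measure Ω} {X : Ω → ℝ} {ν : Measure ℝ} [NeZero ν] (hX : μ.map X = ν) (a : ℝ) :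
    μ {ω | a < X ω} = ν (Set.Ioi a) := by
  have hXm : AEMeasurable X μ := by
    by_contra h
    exact NeZero.ne ν (hX ▸ Measure.map_of_not_aemeasurable h)
  rw [← hX, Measure.map_apply_of_aemeasurable hXm measurableSet_Ioi]
  rfl

theorem positive_class_error_bound_general
    {Ω : Type*} [MeasureSpace Ω]
    (d : ℕ) (k₁ k₂ σ₁ β δ b : ℝ)
    (hk₁ : 0 < k₁) (hσ : 0 < σ₁) (hβ : 3 < β)
    (hδ' : δ < (β - 1) / (β + 1))
    (Z : Ω → ℝ)
    (hZ : Measure.map (fun ω => (Z ω - k₂) / (k₁ * σ₁ ^ 2)) ℙ = chiSq d)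
    (hb : d * k₁ * (β + 1) * σ₁ ^ 2 / 2 + k₂ - δ * (d * k₁ * (β + 1) * σ₁ ^ 2) / 2 ≤ b) :
    ((β - 3) / (β + 1) ≤ δ →
      (ℙ {ω | Z ω > b}).toReal ≤ Real.exp (-d * (β - 1 - δ * (β + 1)) ^ 2 / 32))
    ∧ (δ < (β - 3) / (β + 1) →
      (ℙ {ω | Z ω > b}).toReal ≤ Real.exp (-d * (β - 1 - δ * (β + 1)) / 16)) := by
  have hβ1 : 0 < β + 1 := by linarith
  have hc : 0 < k₁ * σ₁ ^ 2 := by positivity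
  set t := (β - 1 - δ * (β + 1)) / 2 with ht_def
  have ht : 0 < t := by have := (lt_div_iff₀ hβ1).1 hδ'; linarith
  have hthreshold : d * (1 + t) ≤ (b - k₂) / (k₁ * σ₁ ^ 2) := by
    have hscaled : d * (1 + t) * (k₁ * σ₁ ^ 2)
        = d * k₁ * (β + 1) * σ₁ ^ 2 / 2 - δ * (d * k₁ * (β + 1) * σ₁ ^ 2) / 2 := by
      rw [ht_def]; ring
    rw [le_div_iff₀ hc]; linarith
  have htail : (ℙ {ω | Z ω > b}).toReal ≤ (chiSq d).real {x | d * (1 + t) ≤ x} := by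
    have hset : {ω | Z ω > b}
        = {ω | (b - k₂) / (k₁ * σ₁ ^ 2) < (Z ω - k₂) / (k₁ * σ₁ ^ 2)} := by
      ext ω; simp [div_lt_div_iff_of_pos_right hc]
    rw [hset, Measure.map_apply_Ioi_of_map_eq hZ]
    exact measureReal_mono fun x hx => hthreshold.trans hx.le
  refine ⟨fun hsub => ?_, fun hsubexp => ?_⟩
  · have ht1 : t ≤ 1 := by have := (div_le_iff₀ hβ1).1 hsub; linarith
    refine htail.trans ((measureReal_chiSq_ge_le_exp_sq d ht ht1).trans_eq ?_)
    rw [ht_def]; ring_nf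
  · have ht1 : 1 ≤ t := by have := (lt_div_iff₀ hβ1).1 hsubexp; linarith
    refine htail.trans ((measureReal_chiSq_ge_le_exp d ht1).trans_eq ?_)
    rw [ht_def]; ring_nf

theorem positive_class_error_bound
    {Ω : Type*} [MeasureSpace Ω] [IsProbabilityMeasure (ℙ : Measure Ω)]
    (d : ℕ) (hd : 1 ≤ d) (k₁ k₂ σ₁ β δ b : ℝ)
    (hk₁ : 0 < k₁) (hk₂ : 0 < k₂) (hσ : 0 < σ₁) (hβ : 3 < β)
    (hδ : 0 < δ) (hδ' : δ < (β - 1) / (β + 1))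
    (Z : Ω → ℝ)
    (hZ : Measure.map (fun ω => (Z ω - k₂) / (k₁ * σ₁ ^ 2)) ℙ = chiSq d)
    (hb : d * k₁ * (β + 1) * σ₁ ^ 2 / 2 + k₂ - δ * (d * k₁ * (β + 1) * σ₁ ^ 2) / 2 ≤ b) :
    ((β - 3) / (β + 1) ≤ δ →
      (ℙ {ω | Z ω > b}).toReal ≤ Real.exp (-d * (β - 1 - δ * (β + 1)) ^ 2 / 32))
    ∧ (δ < (β - 3) / (β + 1) →
      (ℙ {ω | Z ω > b}).toReal ≤ Real.exp (-d * (β - 1 - δ * (β + 1)) / 16)) :=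
  positive_class_error_bound_general d k₁ k₂ σ₁ β δ b hk₁ hσ hβ hδ' Z hZ hb
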